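/- The matrix g(φ,ε,θ,τ,ψ,ε') defined as the six-fold product diag(e^{iφ/2}, e^{−iφ/2})·diag(e^{ε/2}, e^{−ε/2})·[[cos(θ/2), i sin(θ/2)],[i sin(θ/2), cos(θ/2)]]·[[cosh(τ/2), sinh(τ/2)],[sinh(τ/2), cosh(τ/2)]]·diag(e^{iψ/2}, e^{−iψ/2})·diag(e^{ε'/2}, e^{−ε'/2}) equals the matrix with entries g₁₁ = cos(θ^c/2)·e^{i(φ^c+ψ^c)/2}, g₁₂ = i sin(θ^c/2)·e^{i(φ^c−ψ^c)/2}, g₂₁ = i sin(θ^c/2)·e^{i(ψ^c−φ^c)/2}, g₂₂ = cos(θ^c/2)·e^{−i(φ^c+ψ^c)/2}, where φ^c = φ − iε, θ^c = θ − iτ, ψ^c = ψ − iε'. -/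
import Mathlib


open Matrix Complex

theorem euler_parametrization_SL2C (φ ε θ τ ψ ε' : ℝ) :
    (!![Complex.exp (Complex.I * φ / 2), 0; 0, Complex.exp (-(Complex.I * φ) / 2)] :
        Matrix (Fin 2) (Fin 2) ℂ) *
      !![Complex.exp ((ε : ℂ) / 2), 0; 0, Complex.exp (-(ε : ℂ) / 2)] *
      !![Complex.cos ((θ : ℂ) / 2), Complex.I * Complex.sin ((θ : ℂ) / 2);
         Complex.I * Complex.sin ((θ : ℂ) / 2), Complex.cos ((θ : ℂ) / 2)] *
      !![Complex.cosh ((τ : ℂ) / 2), Complex.sinh ((τ : ℂ) / 2);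
         Complex.sinh ((τ : ℂ) / 2), Complex.cosh ((τ : ℂ) / 2)] *
      !![Complex.exp (Complex.I * ψ / 2), 0; 0, Complex.exp (-(Complex.I * ψ) / 2)] *
      !![Complex.exp ((ε' : ℂ) / 2), 0; 0, Complex.exp (-(ε' : ℂ) / 2)] =
    !![Complex.cos (((θ : ℂ) - Complex.I * τ) / 2) *
         Complex.exp (Complex.I * (((φ : ℂ) - Complex.I * ε) + ((ψ : ℂ) - Complex.I * ε')) / 2),
       Complex.I * Complex.sin (((θ : ℂ) - Complex.I * τ) / 2) *
         Complex.exp (Complex.I * (((φ : ℂ) - Complex.I * ε) - ((ψ : ℂ) - Complex.I * ε')) / 2);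
       Complex.I * Complex.sin (((θ : ℂ) - Complex.I * τ) / 2) *
         Complex.exp (Complex.I * (((ψ : ℂ) - Complex.I * ε') - ((φ : ℂ) - Complex.I * ε)) / 2),
       Complex.cos (((θ : ℂ) - Complex.I * τ) / 2) *
         Complex.exp (-(Complex.I * (((φ : ℂ) - Complex.I * ε) + ((ψ : ℂ) - Complex.I * ε'))) / 2)] := by
  have cosc : Complex.cos (((θ : ℂ) - Complex.I * τ) / 2) =
      Complex.cos ((θ:ℂ)/2) * Complex.cosh ((τ:ℂ)/2)
        + Complex.I * Complex.sin ((θ:ℂ)/2) * Complex.sinh ((τ:ℂ)/2) := by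
    rw [show ((θ : ℂ) - Complex.I * τ) / 2 = (θ:ℂ)/2 - (τ:ℂ)/2 * Complex.I by ring,
        Complex.cos_sub, Complex.cos_mul_I, Complex.sin_mul_I]; ring
  have sinc : Complex.sin (((θ : ℂ) - Complex.I * τ) / 2) =
      Complex.sin ((θ:ℂ)/2) * Complex.cosh ((τ:ℂ)/2)
        - Complex.I * Complex.cos ((θ:ℂ)/2) * Complex.sinh ((τ:ℂ)/2) := by
    rw [show ((θ : ℂ) - Complex.I * τ) / 2 = (θ:ℂ)/2 - (τ:ℂ)/2 * Complex.I by ring,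
        Complex.sin_sub, Complex.cos_mul_I, Complex.sin_mul_I]; ring
  have e1 : Complex.exp (Complex.I * (((φ : ℂ) - Complex.I * ε) + ((ψ : ℂ) - Complex.I * ε')) / 2)
      = Complex.exp (Complex.I * φ / 2) * Complex.exp ((ε:ℂ)/2)
        * Complex.exp (Complex.I * ψ / 2) * Complex.exp ((ε':ℂ)/2) := by
    rw [← Complex.exp_add, ← Complex.exp_add, ← Complex.exp_add]
    congr 1
    linear_combination (-((ε:ℂ) + ε')/2) * Complex.I_mul_I
  have e2 : Complex.exp (Complex.I * (((φ : ℂ) - Complex.I * ε) - ((ψ : ℂ) - Complex.I * ε')) / 2)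
      = Complex.exp (Complex.I * φ / 2) * Complex.exp ((ε:ℂ)/2)
        * Complex.exp (-(Complex.I * ψ) / 2) * Complex.exp (-(ε':ℂ)/2) := by
    rw [← Complex.exp_add, ← Complex.exp_add, ← Complex.exp_add]
    congr 1
    linear_combination (-((ε:ℂ) - ε')/2) * Complex.I_mul_I
  have e3 : Complex.exp (Complex.I * (((ψ : ℂ) - Complex.I * ε') - ((φ : ℂ) - Complex.I * ε)) / 2)
      = Complex.exp (-(Complex.I * φ) / 2) * Complex.exp (-(ε:ℂ)/2)
        * Complex.exp (Complex.I * ψ / 2) * Complex.exp ((ε':ℂ)/2) := by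
    rw [← Complex.exp_add, ← Complex.exp_add, ← Complex.exp_add]
    congr 1
    linear_combination ((( ε:ℂ) - ε')/2) * Complex.I_mul_I
  have e4 : Complex.exp (-(Complex.I * (((φ : ℂ) - Complex.I * ε) + ((ψ : ℂ) - Complex.I * ε'))) / 2)
      = Complex.exp (-(Complex.I * φ) / 2) * Complex.exp (-(ε:ℂ)/2)
        * Complex.exp (-(Complex.I * ψ) / 2) * Complex.exp (-(ε':ℂ)/2) := by
    rw [← Complex.exp_add, ← Complex.exp_add, ← Complex.exp_add]
    congr 1
    linear_combination (((ε:ℂ) + ε')/2) * Complex.I_mul_I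
  ext i j
  fin_cases i <;> fin_cases j <;>
    simp [Matrix.mul_apply, Fin.sum_univ_two, cosc, sinc, e1, e2, e3, e4]
  all_goals ring_nf
  all_goals simp only [Complex.I_sq]
  all_goals ring
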